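/- Let N ≥ 2, 0 < ε < π/2 and 0 < η < min{π/4, ε/2}. Then there exists a constant c > 0, depending only on N, ε and η, such that for every λ ∈ Σ_ε and every ξ' = (ξ_1, …, ξ_{N−1}) with each ξ_j ∈ Σ̃_η one has c·(|λ|^{1/2} + Ã) ≤ Re B ≤ |B| ≤ |λ|^{1/2} + Ã, where A := (ξ_1² + ⋯ + ξ_{N−1}²)^{1/2}, B := (λ + A²)^{1/2} and Ã := (|ξ_1|² + ⋯ + |ξ_{N−1}|²)^{1/2}. -/

import Mathlib

open Complex

noncomputable section

/-- The sector `Σ_ε = {λ ∈ ℂ \ {0} : |arg λ| < π − ε}`. -/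
def SSector (ε : ℝ) : Set ℂ := {z | z ≠ 0 ∧ |z.arg| < Real.pi - ε}

/-- The double sector `Σ̃_η = {z ∈ ℂ \ {0} : |arg z| < η or |arg z| > π − η}`. -/
def DSector (η : ℝ) : Set ℂ := {z | z ≠ 0 ∧ (|z.arg| < η ∨ Real.pi - η < |z.arg|)}

/-- `A = (ξ_1² + ⋯ + ξ_{N−1}²)^{1/2}` (principal square root). -/
def AA {n : ℕ} (ξ : Fin n → ℂ) : ℂ := (∑ j, ξ j ^ 2) ^ ((1 : ℂ) / 2)

/-- `B = (λ + A²)^{1/2}` (principal square root). -/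
def BB {n : ℕ} (lam : ℂ) (ξ : Fin n → ℂ) : ℂ := (lam + AA ξ ^ 2) ^ ((1 : ℂ) / 2)

/-- `Ã = (|ξ_1|² + ⋯ + |ξ_{N−1}|²)^{1/2}`. -/
def tA {n : ℕ} (ξ : Fin n → ℂ) : ℝ := Real.sqrt (∑ j, ‖ξ j‖ ^ 2)

/-- `M_λ(ξ', x_N) = (e^{−B x_N} − e^{−A x_N})/(B − A)`. -/
def Mfun {n : ℕ} (lam : ℂ) (ξ : Fin n → ℂ) (x : ℝ) : ℂ :=
  (Complex.exp (-BB lam ξ * (x : ℂ)) - Complex.exp (-AA ξ * (x : ℂ))) / (BB lam ξ - AA ξ)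

/-!
Write `S = ξ_1² + ⋯ + ξ_{N−1}²`, so that `B = (λ + S)^{1/2}`. The upper bound is the triangle
inequality `|λ + S| ≤ |λ| + Ã²`. For the lower bound, each `ξ_j²` lies in the sector
`|arg| ≤ 2η`, hence so does `S`, and `Re S ≥ cos 2η · Ã²`. Since `2η < ε`, the angle between
`λ` and `S` is at most `π − (ε − 2η)`, which gives `|λ + S| ≳ |λ| + |S|`, and `λ + S` stays in
the closed sector `|arg| ≤ π − ε`, which gives `Re (λ + S)^{1/2} ≳ |λ + S|^{1/2}`.
-/

open scoped Real

section PrincipalSqrt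

lemma sq_cpow_one_half (w : ℂ) : (w ^ ((1 : ℂ) / 2)) ^ 2 = w := by
  rw [one_div, cpow_ofNat_inv_pow]

lemma norm_cpow_one_half (w : ℂ) : ‖w ^ ((1 : ℂ) / 2)‖ = √‖w‖ := by
  conv_rhs => rw [← sq_cpow_one_half w]
  rw [norm_pow, Real.sqrt_sq (norm_nonneg _)]

lemma sqrt_mul_norm_le_re_cpow_one_half {w : ℂ} {a : ℝ} (h : -(Real.cos a * ‖w‖) ≤ w.re) :
    √((1 - Real.cos a) / 2 * ‖w‖) ≤ (w ^ ((1 : ℂ) / 2)).re := by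
  rw [one_div, cpow_inv_two_re]
  exact Real.sqrt_le_sqrt (by linarith)

end PrincipalSqrt

section Sectors

lemma cos_mul_norm_le_re_of_abs_arg_le {z : ℂ} {a : ℝ} (ha : a ≤ π) (h : |z.arg| ≤ a) :
    Real.cos a * ‖z‖ ≤ z.re := by
  rw [← norm_mul_cos_arg, mul_comm, ← Real.cos_abs z.arg]
  exact mul_le_mul_of_nonneg_left
    (Real.cos_le_cos_of_nonneg_of_le_pi (abs_nonneg _) ha h) (norm_nonneg _)

lemma abs_arg_le_of_cos_mul_norm_le_re {z : ℂ} {a : ℝ} (ha : 0 ≤ a) (haπ : a ≤ π)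
    (h : Real.cos a * ‖z‖ ≤ z.re) : |z.arg| ≤ a := by
  rcases eq_or_ne z 0 with rfl | hz
  · simpa using ha
  have hcos : Real.cos a ≤ Real.cos |z.arg| := by
    rwa [Real.cos_abs, cos_arg hz, le_div_iff₀ (norm_pos_iff.2 hz)]
  exact (Real.strictAntiOn_cos.le_iff_ge ⟨ha, haπ⟩ ⟨abs_nonneg _, abs_arg_le_pi z⟩).1 hcos

lemma re_mul_conj_eq (z w : ℂ) :
    (z * starRingEnd ℂ w).re = ‖z‖ * ‖w‖ * Real.cos (z.arg - w.arg) := by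
  rw [Real.cos_sub, mul_re, conj_re, conj_im, ← norm_mul_cos_arg z, ← norm_mul_sin_arg z,
    ← norm_mul_cos_arg w, ← norm_mul_sin_arg w]
  ring

lemma sqrt_mul_norm_add_norm_le_norm_add {z w : ℂ} {δ : ℝ} (hδ : 0 ≤ δ)
    (h : |z.arg - w.arg| ≤ π - δ) :
    √((1 - Real.cos δ) / 2) * (‖z‖ + ‖w‖) ≤ ‖z + w‖ := by
  have hcos : -Real.cos δ ≤ Real.cos (z.arg - w.arg) := by
    rw [← Real.cos_pi_sub, ← Real.cos_abs (z.arg - w.arg)]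
    exact Real.cos_le_cos_of_nonneg_of_le_pi (abs_nonneg _) (by linarith) h
  have hsq : (1 - Real.cos δ) / 2 * (‖z‖ + ‖w‖) ^ 2 ≤ ‖z + w‖ ^ 2 := by
    rw [Complex.sq_norm (z + w), normSq_add, ← Complex.sq_norm, ← Complex.sq_norm, re_mul_conj_eq]
    nlinarith [sq_nonneg (‖z‖ - ‖w‖), mul_nonneg (norm_nonneg z) (norm_nonneg w),
      Real.neg_one_le_cos δ]
  rw [← Real.sqrt_sq (norm_nonneg (z + w)),
    ← Real.sqrt_sq (add_nonneg (norm_nonneg z) (norm_nonneg w)),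
    ← Real.sqrt_mul (by linarith [Real.cos_le_one δ])]
  exact Real.sqrt_le_sqrt hsq

lemma neg_cos_mul_norm_le_re_add {z s : ℂ} {c : ℝ} (hc : 0 ≤ c) (hz : -(c * ‖z‖) ≤ z.re)
    (hs : c * ‖s‖ ≤ s.re) : -(c * ‖z + s‖) ≤ (z + s).re := by
  have htri : ‖z‖ ≤ ‖z + s‖ + ‖s‖ := by simpa using norm_sub_le (z + s) s
  rw [add_re]
  nlinarith [mul_le_mul_of_nonneg_left htri hc]

/-- Squaring maps the double sector `Σ̃_η` into the sector `|arg| ≤ 2η`. -/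
lemma cos_two_mul_mul_sq_norm_le_re_sq {η : ℝ} (hη : 0 ≤ η) (hηπ : η ≤ π / 2) {z : ℂ}
    (hz : z ∈ DSector η) : Real.cos (2 * η) * ‖z‖ ^ 2 ≤ (z ^ 2).re := by
  have hcosη : 0 ≤ Real.cos η := Real.cos_nonneg_of_mem_Icc ⟨by linarith, hηπ⟩
  have habs : Real.cos η ≤ |Real.cos z.arg| := by
    rcases hz.2 with h | h
    · rw [← Real.cos_abs z.arg]
      exact (Real.cos_le_cos_of_nonneg_of_le_pi (abs_nonneg _) (by linarith) h.le).trans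
        (le_abs_self _)
    · have h' := Real.cos_le_cos_of_nonneg_of_le_pi (by linarith) (abs_arg_le_pi z) h.le
      rw [Real.cos_abs, Real.cos_pi_sub] at h'
      exact le_abs.2 (Or.inr (by linarith))
  have hcos_sq : Real.cos η ^ 2 ≤ Real.cos z.arg ^ 2 := by
    simpa only [sq_abs] using pow_le_pow_left₀ hcosη habs 2
  have hre : (z ^ 2).re = ‖z‖ ^ 2 * (2 * Real.cos z.arg ^ 2 - 1) := by
    have hnorm : ‖z‖ ^ 2 = z.re ^ 2 + z.im ^ 2 := by rw [Complex.sq_norm, normSq_apply]; ring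
    rw [sq z, mul_re]
    linear_combination hnorm - 2 * (‖z‖ * Real.cos z.arg + z.re) * norm_mul_cos_arg z
  rw [hre, Real.cos_two_mul]
  nlinarith [mul_le_mul_of_nonneg_left hcos_sq (sq_nonneg ‖z‖)]

end Sectors

section Symbol

variable {n : ℕ}

lemma tA_nonneg (ξ : Fin n → ℂ) : 0 ≤ tA ξ :=
  Real.sqrt_nonneg _

lemma tA_sq (ξ : Fin n → ℂ) : tA ξ ^ 2 = ∑ j, ‖ξ j‖ ^ 2 :=
  Real.sq_sqrt (by positivity)

lemma norm_sum_sq_le_tA_sq (ξ : Fin n → ℂ) : ‖∑ j, ξ j ^ 2‖ ≤ tA ξ ^ 2 := by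
  rw [tA_sq]
  exact (norm_sum_le _ _).trans_eq (Finset.sum_congr rfl fun j _ => norm_pow _ _)

lemma cos_two_mul_mul_tA_sq_le_re_sum_sq {η : ℝ} (hη : 0 ≤ η) (hηπ : η ≤ π / 2)
    {ξ : Fin n → ℂ} (hξ : ∀ j, ξ j ∈ DSector η) :
    Real.cos (2 * η) * tA ξ ^ 2 ≤ (∑ j, ξ j ^ 2).re := by
  rw [tA_sq, Finset.mul_sum, re_sum]
  exact Finset.sum_le_sum fun j _ => cos_two_mul_mul_sq_norm_le_re_sq hη hηπ (hξ j)

lemma BB_eq_cpow (lam : ℂ) (ξ : Fin n → ℂ) :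
    BB lam ξ = (lam + ∑ j, ξ j ^ 2) ^ ((1 : ℂ) / 2) := by
  rw [BB, AA, sq_cpow_one_half]

lemma norm_BB_le (lam : ℂ) (ξ : Fin n → ℂ) : ‖BB lam ξ‖ ≤ √‖lam‖ + tA ξ := by
  rw [BB_eq_cpow, norm_cpow_one_half,
    Real.sqrt_le_left (add_nonneg (Real.sqrt_nonneg _) (tA_nonneg ξ))]
  calc ‖lam + ∑ j, ξ j ^ 2‖ ≤ ‖lam‖ + tA ξ ^ 2 :=
        norm_add_le_of_le le_rfl (norm_sum_sq_le_tA_sq ξ)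
    _ ≤ (√‖lam‖ + tA ξ) ^ 2 := by
        nlinarith [Real.sq_sqrt (norm_nonneg lam),
          mul_nonneg (Real.sqrt_nonneg ‖lam‖) (tA_nonneg ξ)]

lemma le_re_BB {ε η : ℝ} (hη : 0 ≤ η) (hηε : 2 * η ≤ ε) (hε : ε ≤ π / 2) {lam : ℂ}
    (hlam : lam ∈ SSector ε) {ξ : Fin n → ℂ} (hξ : ∀ j, ξ j ∈ DSector η) :
    √((1 - Real.cos ε) / 2 * (√((1 - Real.cos (ε - 2 * η)) / 2) * (Real.cos (2 * η) / 2))) *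
      (√‖lam‖ + tA ξ) ≤ (BB lam ξ).re := by
  set S := ∑ j, ξ j ^ 2
  set k := √((1 - Real.cos (ε - 2 * η)) / 2)
  have hcos2η : 0 ≤ Real.cos (2 * η) := Real.cos_nonneg_of_mem_Icc ⟨by linarith, by linarith⟩
  have hcosε : Real.cos ε ≤ Real.cos (2 * η) :=
    Real.cos_le_cos_of_nonneg_of_le_pi (by linarith) (by linarith) hηε
  have hS_re : Real.cos (2 * η) * tA ξ ^ 2 ≤ S.re :=
    cos_two_mul_mul_tA_sq_le_re_sum_sq hη (by linarith) hξ
  have hS_norm : ‖S‖ ≤ tA ξ ^ 2 := norm_sum_sq_le_tA_sq ξ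
  have hS_cos : Real.cos (2 * η) * ‖S‖ ≤ S.re :=
    (mul_le_mul_of_nonneg_left hS_norm hcos2η).trans hS_re
  have hS_arg : |S.arg| ≤ 2 * η :=
    abs_arg_le_of_cos_mul_norm_le_re (by linarith) (by linarith) hS_cos
  have hlam_re : -(Real.cos ε * ‖lam‖) ≤ lam.re := by
    simpa [Real.cos_pi_sub] using cos_mul_norm_le_re_of_abs_arg_le (by linarith) hlam.2.le
  have hw_re : -(Real.cos ε * ‖lam + S‖) ≤ (lam + S).re :=
    neg_cos_mul_norm_le_re_add (Real.cos_nonneg_of_mem_Icc ⟨by linarith, hε⟩) hlam_re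
      ((mul_le_mul_of_nonneg_right hcosε (norm_nonneg S)).trans hS_cos)
  have hw_norm : k * (‖lam‖ + ‖S‖) ≤ ‖lam + S‖ :=
    sqrt_mul_norm_add_norm_le_norm_add (by linarith)
      ((abs_sub _ _).trans (by linarith [hlam.2]))
  have hsum : Real.cos (2 * η) / 2 * (√‖lam‖ + tA ξ) ^ 2 ≤ ‖lam‖ + ‖S‖ := by
    nlinarith [add_sq_le (a := √‖lam‖) (b := tA ξ), Real.sq_sqrt (norm_nonneg lam),
      Real.cos_le_one (2 * η), norm_nonneg lam, sq_nonneg (tA ξ), Complex.re_le_norm S]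
  calc _ = √((1 - Real.cos ε) / 2 * (k * (Real.cos (2 * η) / 2 * (√‖lam‖ + tA ξ) ^ 2))) := by
        rw [show ∀ x : ℝ, (1 - Real.cos ε) / 2 * (k * (Real.cos (2 * η) / 2 * x)) =
          (1 - Real.cos ε) / 2 * (k * (Real.cos (2 * η) / 2)) * x from fun x => by ring,
          Real.sqrt_mul' _ (sq_nonneg _),
          Real.sqrt_sq (add_nonneg (Real.sqrt_nonneg _) (tA_nonneg ξ))]
    _ ≤ √((1 - Real.cos ε) / 2 * ‖lam + S‖) := by
        gcongr
        · linarith [Real.cos_le_one ε]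
        · exact hw_norm.trans' (mul_le_mul_of_nonneg_left hsum (Real.sqrt_nonneg _))
    _ ≤ (BB lam ξ).re := by
        rw [BB_eq_cpow]
        exact sqrt_mul_norm_le_re_cpow_one_half hw_re

end Symbol

lemma one_sub_cos_pos {x : ℝ} (h0 : 0 < x) (hπ : x ≤ π) : 0 < 1 - Real.cos x := by
  have := Real.cos_lt_cos_of_nonneg_of_le_pi le_rfl hπ h0
  rw [Real.cos_zero] at this
  linarith

theorem B_bounds_general
    (N : ℕ) (ε η : ℝ) (hε : 0 < ε) (hε' : ε < Real.pi / 2)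
    (hη : 0 < η) (hη' : η < min (Real.pi / 4) (ε / 2)) :
    ∃ c : ℝ, 0 < c ∧ ∀ (lam : ℂ), lam ∈ SSector ε →
      ∀ ξ : Fin (N - 1) → ℂ, (∀ j, ξ j ∈ DSector η) →
        c * (Real.sqrt (‖lam‖) + tA ξ) ≤ (BB lam ξ).re ∧
        (BB lam ξ).re ≤ ‖BB lam ξ‖ ∧
        ‖BB lam ξ‖ ≤ Real.sqrt (‖lam‖) + tA ξ := by
  have hηε : 2 * η < ε := by linarith [min_le_right (π / 4) (ε / 2)]
  refine ⟨_, ?_, fun lam hlam ξ hξ =>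
    ⟨le_re_BB hη.le hηε.le hε'.le hlam hξ, re_le_norm _, norm_BB_le lam ξ⟩⟩
  have hcos2η : 0 < Real.cos (2 * η) := Real.cos_pos_of_mem_Ioo ⟨by linarith, by linarith⟩
  have hcosε : 0 < 1 - Real.cos ε := one_sub_cos_pos hε (by linarith)
  have hcosδ : 0 < 1 - Real.cos (ε - 2 * η) := one_sub_cos_pos (sub_pos.2 hηε) (by linarith)
  positivity

/-- Lemma (b): `c(|λ|^{1/2} + Ã) ≤ Re B ≤ |B| ≤ |λ|^{1/2} + Ã`. -/
theorem B_bounds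
    (N : ℕ) (hN : 2 ≤ N) (ε η : ℝ) (hε : 0 < ε) (hε' : ε < Real.pi / 2)
    (hη : 0 < η) (hη' : η < min (Real.pi / 4) (ε / 2)) :
    ∃ c : ℝ, 0 < c ∧ ∀ (lam : ℂ), lam ∈ SSector ε →
      ∀ ξ : Fin (N - 1) → ℂ, (∀ j, ξ j ∈ DSector η) →
        c * (Real.sqrt (‖lam‖) + tA ξ) ≤ (BB lam ξ).re ∧
        (BB lam ξ).re ≤ ‖BB lam ξ‖ ∧
        ‖BB lam ξ‖ ≤ Real.sqrt (‖lam‖) + tA ξ :=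
  B_bounds_general N ε η hε hε' hη hη'
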